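/- arXiv:2311.02430 — 2 statements merged into one kernel-verified Lean document; each statement's English description precedes it below -/
import Mathlib

section
/- Let G be a finite simple graph whose complement G^c has no induced 4-cycle, and let r ≥ 2. If F ⊆ V(G) is r-independent, then at most one connected component of the induced subgraph G[F] has more than one vertex. -/
/-- A set `W` of vertices is `r`-independent in `G` if every connected component
of the induced subgraph `G[W]` has at most `r` vertices. -/
def SimpleGraph.IsRIndepSet {V : Type*} (G : SimpleGraph V) (r : ℕ) (W : Set V) : Prop :=
  ∀ c : (G.induce W).ConnectedComponent, c.supp.ncard ≤ r

/-!
Two components of `G[F]` with an edge each, `ab` and `cd`, have no edges between them, so in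
`Gᶜ` the vertices `a, c, b, d` span a 4-cycle whose chords `ab` and `cd` are missing.
-/

namespace SimpleGraph

variable {W : Type*} {H : SimpleGraph W}

lemma ConnectedComponent.exists_adj_of_one_lt_ncard_supp (C : H.ConnectedComponent)
    (hC : 1 < C.supp.ncard) : ∃ u v, u ∈ C.supp ∧ v ∈ C.supp ∧ H.Adj u v := by
  obtain ⟨u, hu⟩ := C.nonempty_supp
  obtain ⟨w, hw, hwu⟩ := Set.exists_ne_of_one_lt_ncard hC u
  obtain ⟨p⟩ := C.reachable_of_mem_supp hu hw
  have hadj : H.Adj u p.snd := p.adj_snd (Walk.not_nil_of_ne hwu.symm)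
  exact ⟨u, p.snd, hu, C.mem_supp_of_adj_mem_supp hu hadj, hadj⟩

lemma compl_adj_of_connectedComponentMk_ne {u v : W}
    (h : H.connectedComponentMk u ≠ H.connectedComponentMk v) : Hᶜ.Adj u v :=
  (H.reachable_or_compl_adj u v).resolve_left fun huv ↦ h (ConnectedComponent.sound huv)

lemma nonempty_cycleGraph_four_embedding {a b c d : W}
    (hac : H.Adj a c) (hcb : H.Adj c b) (hbd : H.Adj b d) (hda : H.Adj d a)
    (hab : a ≠ b) (hcd : c ≠ d) (nab : ¬H.Adj a b) (ncd : ¬H.Adj c d) :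
    Nonempty (cycleGraph 4 ↪g H) := by
  have nba : ¬H.Adj b a := fun h ↦ nab h.symm
  have ndc : ¬H.Adj d c := fun h ↦ ncd h.symm
  refine ⟨⟨⟨![a, c, b, d], fun i j hij ↦ ?_⟩, fun {i j} ↦ ?_⟩⟩
  · fin_cases i <;> fin_cases j <;> simp_all [hac.ne, hcb.ne, hbd.ne, hda.ne]
  · change H.Adj (![a, c, b, d] i) (![a, c, b, d] j) ↔ _
    fin_cases i <;> fin_cases j <;>
      simp +decide [hac, hcb, hbd, hda, hac.symm, hcb.symm, hbd.symm, hda.symm, nab, nba,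
        ncd, ndc]

lemma nonempty_cycleGraph_four_embedding_compl_of_ne {C₁ C₂ : H.ConnectedComponent}
    (hne : C₁ ≠ C₂) (h₁ : 1 < C₁.supp.ncard) (h₂ : 1 < C₂.supp.ncard) :
    Nonempty (cycleGraph 4 ↪g Hᶜ) := by
  obtain ⟨a, b, ha, hb, hab⟩ := C₁.exists_adj_of_one_lt_ncard_supp h₁
  obtain ⟨c, d, hc, hd, hcd⟩ := C₂.exists_adj_of_one_lt_ncard_supp h₂
  have cross {u v : W} (hu : u ∈ C₁.supp) (hv : v ∈ C₂.supp) : Hᶜ.Adj u v :=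
    compl_adj_of_connectedComponentMk_ne (hu ▸ hv ▸ hne)
  exact nonempty_cycleGraph_four_embedding (cross ha hc) (cross hb hc).symm (cross hb hd)
    (cross ha hd).symm hab.ne hcd.ne (fun h ↦ h.2 hab) (fun h ↦ h.2 hcd)

end SimpleGraph

theorem stmt12_general {V : Type*} (G : SimpleGraph V)
    (h4 : IsEmpty (SimpleGraph.cycleGraph 4 ↪g Gᶜ))
    (F : Set V) :
    ∀ c₁ c₂ : (G.induce F).ConnectedComponent,
      1 < c₁.supp.ncard → 1 < c₂.supp.ncard → c₁ = c₂ := by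
  intro c₁ c₂ h₁ h₂
  by_contra hne
  obtain ⟨e⟩ := SimpleGraph.nonempty_cycleGraph_four_embedding_compl_of_ne hne h₁ h₂
  exact h4.false ((SimpleGraph.Embedding.complEquiv (SimpleGraph.Embedding.induce F)).comp e)

/-- If `Gᶜ` has no induced 4-cycle, `r ≥ 2` and `F` is `r`-independent, then at
most one connected component of `G[F]` has more than one vertex. -/
theorem stmt12 {V : Type*} [Fintype V] (G : SimpleGraph V)
    (h4 : IsEmpty (SimpleGraph.cycleGraph 4 ↪g Gᶜ))
    (r : ℕ) (hr : 2 ≤ r) (F : Set V) (hF : G.IsRIndepSet r F) :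
    ∀ c₁ c₂ : (G.induce F).ConnectedComponent,
      1 < c₁.supp.ncard → 1 < c₂.supp.ncard → c₁ = c₂ :=
  stmt12_general G h4 F
end

section
/- Let G be a finite simple graph whose complement G^c has no induced 4-cycle, and let F_1, F_2 be two distinct facets of Ind_r(G) (r ≥ 2) both containing a set F with |F| = r and G[F] connected. Then there exist vertices v ∈ F_2 \ F_1 and w ∈ F_1 \ F_2 with {v,w} ∈ E(G), and together with an edge {u_1,u_2} of G[F] this produces an induced 4-cycle in G^c — a contradiction; hence no such two distinct facets exist. -/
/-!
Let `v ∈ F₂ \ F₁`. In an `r`-independent set containing the connected `r`-set `F`, the component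
of `F` is already full, so no vertex outside `F` has a neighbour in `F`. Hence a neighbour
`w ∈ F₁ \ F` of `v`, together with an edge `u₁u₂` of `G[F]`, would give an induced `2K₂`
`{v, w}, {u₁, u₂}` in `G`, i.e. an induced `C₄` in `Gᶜ`; and `w ∈ F` is excluded directly.
So `v` has no neighbour in `F₁`, and `F₁ ∪ {v}` is `r`-independent, contradicting maximality.
-/

namespace SimpleGraph

variable {V : Type*} {G : SimpleGraph V} {r : ℕ} {W S : Set V}

/-- The cycle `a, c, b, d` of `Gᶜ` is induced because `ab` and `cd` are edges of `G`. -/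
lemma nonempty_cycleGraph_four_embedding_compl {a b c d : V} (hab : G.Adj a b)
    (hcd : G.Adj c d) (hac : ¬G.Adj a c) (had : ¬G.Adj a d) (hbc : ¬G.Adj b c)
    (hbd : ¬G.Adj b d) : Nonempty (cycleGraph 4 ↪g Gᶜ) := by
  have hac' : a ≠ c := fun h => had (h ▸ hcd)
  have had' : a ≠ d := fun h => hac (h ▸ hcd.symm)
  have hbc' : b ≠ c := fun h => hbd (h ▸ hcd)
  have hbd' : b ≠ d := fun h => hbc (h ▸ hcd.symm)
  let f : Fin 4 → V := ![a, c, b, d]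
  have hf : Function.Injective f := by
    intro i j hij
    fin_cases i <;> fin_cases j <;> simp_all [f, eq_comm]
  refine ⟨⟨⟨f, hf⟩, fun {i j} => ?_⟩⟩
  fin_cases i <;> fin_cases j <;>
    simp_all [f, cycleGraph_adj, compl_adj, G.adj_comm, eq_comm] <;> decide

lemma IsRIndepSet.ncard_le_of_connected (hW : G.IsRIndepSet r W) (hfin : W.Finite)
    (hSW : S ⊆ W) (hS : (G.induce S).Connected) : S.ncard ≤ r := by
  obtain ⟨⟨s₀, hs₀⟩⟩ := hS.nonempty
  let c := (G.induce W).connectedComponentMk ⟨s₀, hSW hs₀⟩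
  have hSc : S ⊆ Subtype.val '' c.supp := fun s hs =>
    ⟨⟨s, hSW hs⟩, ConnectedComponent.sound
      ((hS.preconnected ⟨s, hs⟩ ⟨s₀, hs₀⟩).map (induceHomOfLE G hSW).toHom), rfl⟩
  calc S.ncard ≤ (Subtype.val '' c.supp).ncard :=
        Set.ncard_le_ncard hSc (hfin.subset (Subtype.coe_image_subset W c.supp))
    _ = c.supp.ncard := Set.ncard_image_of_injective _ Subtype.val_injective
    _ ≤ r := hW c

lemma isRIndepSet_of_forall_connected
    (h : ∀ S ⊆ W, (G.induce S).Connected → S.ncard ≤ r) : G.IsRIndepSet r W := by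
  intro c
  let f : c.toSimpleGraph →g G.induce (Subtype.val '' c.supp) :=
    { toFun := fun x => ⟨x.1.1, x.1, x.2, rfl⟩, map_rel' := id }
  have hf : Function.Surjective f := by
    rintro ⟨_, x, hx, rfl⟩
    exact ⟨⟨x, hx⟩, rfl⟩
  rw [← Set.ncard_image_of_injective _ Subtype.val_injective]
  exact h _ (Subtype.coe_image_subset W c.supp) (c.connected_toSimpleGraph.map f hf)

lemma IsRIndepSet.insert (hW : G.IsRIndepSet r W) (hfin : W.Finite) (hr : 1 ≤ r) {v : V}
    (hv : ∀ w ∈ W, ¬G.Adj v w) : G.IsRIndepSet r (insert v W) := by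
  refine isRIndepSet_of_forall_connected fun S hSW hS => ?_
  by_cases hvS : v ∈ S
  · have hS1 : S = {v} := by
      refine Set.eq_singleton_iff_unique_mem.2 ⟨hvS, fun u hu => by_contra fun huv => ?_⟩
      have : Nontrivial S := Set.nontrivial_coe_sort.2 ⟨u, hu, v, hvS, huv⟩
      obtain ⟨⟨m, hmS⟩, hvm⟩ := hS.preconnected.exists_adj_of_nontrivial ⟨v, hvS⟩
      exact hv m ((hSW hmS).resolve_left (G.ne_of_adj hvm).symm) hvm
    rw [hS1, Set.ncard_singleton]
    exact hr
  · exact hW.ncard_le_of_connected hfin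
      (fun s hs => (hSW hs).resolve_left (ne_of_mem_of_not_mem hs hvS)) hS

lemma IsRIndepSet.not_adj_of_connected (hW : G.IsRIndepSet r W) (hfin : W.Finite)
    {F : Set V} (hFW : F ⊆ W) (hF : (G.induce F).Connected) (hcard : F.ncard = r)
    {x y : V} (hx : x ∈ F) (hy : y ∈ W) (hyF : y ∉ F) : ¬G.Adj x y := by
  intro hxy
  have hconn : (G.induce (F ∪ {x, y})).Connected :=
    induce_union_connected hF.preconnected (induce_pair_connected_of_adj hxy).preconnected
      ⟨x, hx, Set.mem_insert x {y}⟩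
  have hle := hW.ncard_le_of_connected hfin
    (Set.union_subset hFW (Set.insert_subset (hFW hx) (Set.singleton_subset_iff.2 hy))) hconn
  rw [Set.union_insert, Set.union_singleton, Set.insert_eq_of_mem (Set.mem_insert_of_mem y hx),
    Set.ncard_insert_of_notMem hyF (hfin.subset hFW)] at hle
  omega

lemma IsRIndepSet.not_adj_of_isEmpty_cycleGraph_four_embedding_compl
    (h4 : IsEmpty (cycleGraph 4 ↪g Gᶜ)) (hr : 2 ≤ r) {F W₁ W₂ : Set V}
    (hF : (G.induce F).Connected) (hcard : F.ncard = r)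
    (hW₁ : G.IsRIndepSet r W₁) (hfin₁ : W₁.Finite) (hFW₁ : F ⊆ W₁)
    (hW₂ : G.IsRIndepSet r W₂) (hfin₂ : W₂.Finite) (hFW₂ : F ⊆ W₂)
    {v w : V} (hv : v ∈ W₂) (hvF : v ∉ F) (hw : w ∈ W₁) : ¬G.Adj v w := by
  intro hvw
  by_cases hwF : w ∈ F
  · exact hW₂.not_adj_of_connected hfin₂ hFW₂ hF hcard hwF hv hvF hvw.symm
  have : Nontrivial F := (Set.one_lt_ncard_iff_nontrivial_and_finite.1 (by omega)).1.coe_sort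
  obtain ⟨⟨u₁, hu₁⟩⟩ := hF.nonempty
  obtain ⟨⟨u₂, hu₂⟩, hu⟩ := hF.preconnected.exists_adj_of_nontrivial ⟨u₁, hu₁⟩
  have hvu := fun {u} (hu : u ∈ F) (h : G.Adj v u) =>
    hW₂.not_adj_of_connected hfin₂ hFW₂ hF hcard hu hv hvF h.symm
  have hwu := fun {u} (hu : u ∈ F) (h : G.Adj w u) =>
    hW₁.not_adj_of_connected hfin₁ hFW₁ hF hcard hu hw hwF h.symm
  exact h4.false (nonempty_cycleGraph_four_embedding_compl hvw hu (hvu hu₁) (hvu hu₂)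
    (hwu hu₁) (hwu hu₂)).some

end SimpleGraph

theorem stmt18_general {V : Type*} (G : SimpleGraph V)
    (h4 : IsEmpty (SimpleGraph.cycleGraph 4 ↪g Gᶜ))
    (r : ℕ) (hr : 2 ≤ r)
    (F : Finset V) (hcard : F.card = r)
    (hconn : (G.induce (F : Set V)).Connected)
    (F₁ F₂ : Finset V)
    (hF₁ : G.IsRIndepSet r (F₁ : Set V))
    (hF₁max : ∀ M : Finset V, G.IsRIndepSet r (M : Set V) → F₁ ⊆ M → M = F₁)
    (hF₂ : G.IsRIndepSet r (F₂ : Set V))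
    (hF₂max : ∀ M : Finset V, G.IsRIndepSet r (M : Set V) → F₂ ⊆ M → M = F₂)
    (hsub₁ : F ⊆ F₁) (hsub₂ : F ⊆ F₂) :
    F₁ = F₂ := by
  classical
  have hF : (F : Set V).ncard = r := by rw [Set.ncard_coe_finset, hcard]
  suffices F₂ ⊆ F₁ from hF₂max F₁ hF₁ this
  intro v hv₂
  by_contra hv₁
  have hv : ∀ w ∈ (F₁ : Set V), ¬G.Adj v w := fun w hw =>
    hF₁.not_adj_of_isEmpty_cycleGraph_four_embedding_compl h4 hr hconn hF F₁.finite_toSet hsub₁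
      hF₂ F₂.finite_toSet hsub₂ hv₂ (fun h => hv₁ (hsub₁ h)) hw
  have hins : G.IsRIndepSet r (insert v F₁ : Finset V) := by
    rw [Finset.coe_insert]
    exact hF₁.insert F₁.finite_toSet (by omega) hv
  exact hv₁ (hF₁max _ hins (Finset.subset_insert v F₁) ▸ Finset.mem_insert_self v F₁)

/-- If `Gᶜ` has no induced 4-cycle and `F` is an `r`-set (`r ≥ 2`) with `G[F]`
connected, then two facets of `Ind_r(G)` both containing `F` must coincide:
no two distinct such facets exist. -/
theorem stmt18 {V : Type*} [Fintype V] (G : SimpleGraph V)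
    (h4 : IsEmpty (SimpleGraph.cycleGraph 4 ↪g Gᶜ))
    (r : ℕ) (hr : 2 ≤ r)
    (F : Finset V) (hcard : F.card = r)
    (hconn : (G.induce (F : Set V)).Connected)
    (F₁ F₂ : Finset V)
    (hF₁ : G.IsRIndepSet r (F₁ : Set V))
    (hF₁max : ∀ M : Finset V, G.IsRIndepSet r (M : Set V) → F₁ ⊆ M → M = F₁)
    (hF₂ : G.IsRIndepSet r (F₂ : Set V))
    (hF₂max : ∀ M : Finset V, G.IsRIndepSet r (M : Set V) → F₂ ⊆ M → M = F₂)
    (hsub₁ : F ⊆ F₁) (hsub₂ : F ⊆ F₂) :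
    F₁ = F₂ :=
  stmt18_general G h4 r hr F hcard hconn F₁ F₂ hF₁ hF₁max hF₂ hF₂max hsub₁ hsub₂
end
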